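/- Define polynomials c_{n,k}(p,q) in ℝ[p,q] by c_{0,0}(p,q) = 1, c_{n,k}(p,q) = 0 unless 0 ≤ k ≤ n, c_{n+1,0}(p,q) = (1+p+q)·c_{n,0}(p,q) + q·c_{n,1}(p,q), and c_{n+1,k}(p,q) = c_{n,k−1}(p,q) + (1+p+q)·c_{n,k}(p,q) + q·c_{n,k+1}(p,q) for 1 ≤ k ≤ n. Then the sequence (c_{n,0}(p,q))_{n ≥ 0} is a Stieltjes moment sequence of polynomials, i.e., the Hankel matrix [c_{i+j,0}(p,q)]_{i,j ≥ 0} is (p,q)-totally positive. -/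

import Mathlib

/-- A multivariable real polynomial is nonnegative if all of its coefficients
are nonnegative. -/
def PolyNonneg {m : ℕ} (f : MvPolynomial (Fin m) ℝ) : Prop :=
  ∀ d : Fin m →₀ ℕ, 0 ≤ f.coeff d

/-- An infinite matrix of multivariable real polynomials is totally positive if
every minor has all nonnegative coefficients. -/
def xTP {m : ℕ} (M : ℕ → ℕ → MvPolynomial (Fin m) ℝ) : Prop :=
  ∀ (k : ℕ) (r c : Fin k → ℕ), StrictMono r → StrictMono c →
    PolyNonneg (Matrix.det (Matrix.of fun i j => M (r i) (c j)))

/-- The variable `p` in `ℝ[p,q]`. -/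
noncomputable def P : MvPolynomial (Fin 2) ℝ := MvPolynomial.X 0

/-- The variable `q` in `ℝ[p,q]`. -/
noncomputable def Q : MvPolynomial (Fin 2) ℝ := MvPolynomial.X 1

/-!
The polynomials `c n k` form the output matrix of the tridiagonal production matrix `T` with `1`
above, `1 + p + q` on and `q` below the diagonal: row `n + 1` of `c` is row `n` of `c` times `T`.

Every minor `Δ` of `T` has nonnegative coefficients. Write `Δ'` and `Δ''` for `Δ` with its first
one or two rows and columns deleted. Expanding along the first row or column either kills `Δ`, or
pulls out a factor `1`, `q` or `1 + p + q`, or, for two consecutive diagonal entries, gives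
`Δ = (1 + p + q) Δ' - q Δ''`. The negative term is absorbed by proving along the induction that,
when the top-left entry of `Δ` lies on the diagonal, also `Δ - Δ'` has nonnegative coefficients,
as `Δ - Δ' = p Δ' + q (Δ' - Δ'')`. By Cauchy–Binet and induction on the rows, every minor of `c`
then has nonnegative coefficients. Finally `T · diag(q^t)` is symmetric, which gives
`c (i + j) 0 = ∑ₜ c i t * q ^ t * c j t`; so the Hankel matrix factors as `C · diag(q^t) · Cᵀ`
and one more application of Cauchy–Binet concludes.
-/

open Finset

namespace Matrix

variable {R : Type*} [CommRing R]

theorem det_mul_eq_sum_det_submatrix_mul_prod {m n : Type*} [Fintype m] [DecidableEq m]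
    [Fintype n] [DecidableEq n] (A : Matrix m n R) (B : Matrix n m R) :
    (A * B).det = ∑ p : m → n, (A.submatrix id p).det * ∏ i, B (p i) i := by
  simp only [det_apply', mul_apply, prod_univ_sum, mul_sum, Fintype.piFinset_univ, sum_mul,
    submatrix_apply, id_eq, prod_mul_distrib, mul_assoc]
  exact sum_comm

open Classical in
/-- The Cauchy–Binet formula. -/
theorem det_mul_eq_sum_strictMono {k : ℕ} {n : Type*} [Fintype n] [LinearOrder n]
    (A : Matrix (Fin k) n R) (B : Matrix n (Fin k) R) :
    (A * B).det = ∑ g : Fin k → n with StrictMono g,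
      (A.submatrix id g).det * (B.submatrix g id).det := by
  have hB (g : Fin k → n) : (B.submatrix g id).det = ∑ τ : Equiv.Perm (Fin k),
      (Equiv.Perm.sign τ : R) * ∏ i, B (g (τ i)) i := by
    simp [det_apply']
  set pairs : Finset ((Fin k → n) × Equiv.Perm (Fin k)) :=
    ({g : Fin k → n | StrictMono g} : Finset _) ×ˢ univ
  have hinj : Set.InjOn (fun x : (Fin k → n) × Equiv.Perm (Fin k) => x.1 ∘ x.2) pairs := by
    rintro ⟨g, τ⟩ hg ⟨g', τ'⟩ hg' h
    simp only [pairs, coe_product, coe_filter, mem_univ, true_and, coe_univ, Set.mem_prod,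
      Set.mem_ofPred_eq, Set.mem_univ, and_true] at hg hg' h
    have hgg : g = g' := by
      rw [← hg.range_inj hg', ← τ.surjective.range_comp, h, τ'.surjective.range_comp]
    subst hgg
    exact Prod.ext rfl (Equiv.coe_fn_injective ((hg.injective.comp_left).eq_iff.1 h))
  -- A non-injective `p` contributes `0`; an injective one is uniquely `g ∘ τ` with `g` strictly
  -- monotone and `τ` a permutation.
  have hvanish (p : Fin k → n) (hp : p ∉ pairs.image fun x => x.1 ∘ x.2) :
      (A.submatrix id p).det * ∏ i, B (p i) i = 0 := by
    suffices ¬ p.Injective by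
      obtain ⟨i, j, hij, hne⟩ : ∃ i j, p i = p j ∧ i ≠ j := by
        simpa [Function.Injective] using this
      rw [det_zero_of_column_eq hne (fun r => by simp [hij]), zero_mul]
    intro hp_inj
    refine hp (mem_image.2 ⟨(p ∘ Tuple.sort p, (Tuple.sort p)⁻¹), ?_, ?_⟩)
    · simpa [pairs] using (Tuple.monotone_sort p).strictMono_of_injective
        (hp_inj.comp (Tuple.sort p).injective)
    · ext i; simp
  rw [det_mul_eq_sum_det_submatrix_mul_prod,
    ← sum_subset (subset_univ _) fun p _ hp => hvanish p hp, sum_image hinj, sum_product]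
  refine sum_congr rfl fun g _ => ?_
  simp only [hB, mul_sum]
  refine sum_congr rfl fun τ _ => ?_
  rw [show A.submatrix id (g ∘ τ) = (A.submatrix id g).submatrix id τ from rfl, det_permute']
  simp only [Function.comp_apply]
  ring

variable {k : ℕ}

theorem det_succ_eq_mul_of_column (A : Matrix (Fin (k + 1)) (Fin (k + 1)) R)
    (h : ∀ i : Fin k, A i.succ 0 = 0) :
    A.det = A 0 0 * (A.submatrix Fin.succ Fin.succ).det := by
  rw [det_succ_column_zero, Fin.sum_univ_succ, Fintype.sum_eq_zero _ fun i => by simp [h i]]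
  simp

theorem det_succ_eq_mul_of_row (A : Matrix (Fin (k + 1)) (Fin (k + 1)) R)
    (h : ∀ j : Fin k, A 0 j.succ = 0) :
    A.det = A 0 0 * (A.submatrix Fin.succ Fin.succ).det := by
  rw [← det_transpose, det_succ_eq_mul_of_column Aᵀ h, ← transpose_submatrix, det_transpose,
    transpose_apply]

theorem det_succ_succ_eq (A : Matrix (Fin (k + 2)) (Fin (k + 2)) R)
    (hrow : ∀ j : Fin k, A 0 j.succ.succ = 0) (hcol : ∀ i : Fin k, A i.succ.succ 0 = 0) :
    A.det = A 0 0 * (A.submatrix Fin.succ Fin.succ).det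
      - A 0 1 * A 1 0 * (A.submatrix (Fin.succ ∘ Fin.succ) (Fin.succ ∘ Fin.succ)).det := by
  rw [det_succ_row_zero, Fin.sum_univ_succ, Fin.sum_univ_succ,
    Fintype.sum_eq_zero _ fun j => by simp [hrow j]]
  have hminor : (A.submatrix Fin.succ (Fin.succAbove 1)).det
      = A 1 0 * (A.submatrix (Fin.succ ∘ Fin.succ) (Fin.succ ∘ Fin.succ)).det := by
    rw [det_succ_eq_mul_of_column _ fun i => by simpa using hcol i]
    have hcols : (Fin.succAbove 1 ∘ Fin.succ : Fin k → Fin (k + 2)) = Fin.succ ∘ Fin.succ :=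
      funext fun j => Fin.succAbove_of_le_castSucc 1 j.succ (by simp [Fin.le_def])
    rw [submatrix_submatrix, hcols]
    simp
  simp [hminor]
  ring

end Matrix

section TotalPositivity

variable {R : Type*} [CommRing R]

def minor (M : ℕ → ℕ → R) {k : ℕ} (r s : Fin k → ℕ) : R :=
  (Matrix.of fun i j => M (r i) (s j)).det

def IsTotallyPositive (S : Subsemiring R) (M : ℕ → ℕ → R) : Prop :=
  ∀ k (r s : Fin k → ℕ), StrictMono r → StrictMono s → minor M r s ∈ S

variable {M : ℕ → ℕ → R} {k : ℕ}

@[simp] theorem minor_of_isEmpty (r s : Fin 0 → ℕ) : minor M r s = 1 :=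
  Matrix.det_isEmpty

theorem minor_succ_of_column {r s : Fin (k + 1) → ℕ}
    (h : ∀ i : Fin k, M (r i.succ) (s 0) = 0) :
    minor M r s = M (r 0) (s 0) * minor M (Fin.tail r) (Fin.tail s) :=
  Matrix.det_succ_eq_mul_of_column _ h

theorem minor_succ_of_row {r s : Fin (k + 1) → ℕ} (h : ∀ j : Fin k, M (r 0) (s j.succ) = 0) :
    minor M r s = M (r 0) (s 0) * minor M (Fin.tail r) (Fin.tail s) :=
  Matrix.det_succ_eq_mul_of_row _ h

theorem minor_eq_zero_of_row {r s : Fin (k + 1) → ℕ} (h : ∀ j, M (r 0) (s j) = 0) :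
    minor M r s = 0 :=
  Matrix.det_eq_zero_of_row_eq_zero 0 h

theorem minor_eq_zero_of_column {r s : Fin (k + 1) → ℕ} (h : ∀ i, M (r i) (s 0) = 0) :
    minor M r s = 0 :=
  Matrix.det_eq_zero_of_column_eq_zero 0 h

theorem minor_succ_succ {r s : Fin (k + 2) → ℕ}
    (hrow : ∀ j : Fin k, M (r 0) (s j.succ.succ) = 0)
    (hcol : ∀ i : Fin k, M (r i.succ.succ) (s 0) = 0) :
    minor M r s = M (r 0) (s 0) * minor M (Fin.tail r) (Fin.tail s)
      - M (r 0) (s 1) * M (r 1) (s 0) * minor M (Fin.tail (Fin.tail r)) (Fin.tail (Fin.tail s)) :=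
  Matrix.det_succ_succ_eq _ hrow hcol

def tridiag (l d u : R) (i j : ℕ) : R :=
  if j = i + 1 then u else if j = i then d else if i = j + 1 then l else 0

section Tridiag

variable {l d u : R} {i j : ℕ}

@[simp] theorem tridiag_self : tridiag l d u i i = d := by simp [tridiag]

@[simp] theorem tridiag_succ_right : tridiag l d u i (i + 1) = u := by simp [tridiag]

@[simp] theorem tridiag_succ_left : tridiag l d u (j + 1) j = l := by
  simp [tridiag, show j ≠ j + 1 + 1 by omega]

theorem tridiag_eq_add : tridiag l d u i j =
    (if i + 1 = j then u else 0) + (if i = j then d else 0) + (if i = j + 1 then l else 0) := by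
  simp only [tridiag]
  split_ifs <;> first | omega | simp

theorem tridiag_eq_zero (h : i + 2 ≤ j ∨ j + 2 ≤ i) : tridiag l d u i j = 0 := by
  simp only [tridiag]
  split_ifs <;> first | rfl | omega

theorem minor_tridiag_eq_mul_of_gap {r s : Fin (k + 2) → ℕ} (hr : StrictMono r)
    (hs : StrictMono s) (h0 : r 0 = s 0) (hgap : r 0 + 2 ≤ r 1 ∨ s 0 + 2 ≤ s 1) :
    minor (tridiag l d u) r s = d * minor (tridiag l d u) (Fin.tail r) (Fin.tail s) := by
  rcases hgap with hgap | hgap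
  · rw [minor_succ_of_column fun i => tridiag_eq_zero (Or.inr ?_), h0, tridiag_self]
    have : r 1 ≤ r i.succ := hr.monotone (by simp [Fin.le_def])
    omega
  · rw [minor_succ_of_row fun j => tridiag_eq_zero (Or.inl ?_), h0, tridiag_self]
    have : s 1 ≤ s j.succ := hs.monotone (by simp [Fin.le_def])
    omega

theorem minor_tridiag_eq_sub {r s : Fin (k + 2) → ℕ} (hr : StrictMono r) (hs : StrictMono s)
    (h0 : r 0 = s 0) (hr1 : r 1 = r 0 + 1) (hs1 : s 1 = s 0 + 1) :
    minor (tridiag l d u) r s = d * minor (tridiag l d u) (Fin.tail r) (Fin.tail s)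
      - u * l * minor (tridiag l d u) (Fin.tail (Fin.tail r)) (Fin.tail (Fin.tail s)) := by
  rw [minor_succ_succ (fun j => tridiag_eq_zero (Or.inl ?_))
    (fun i => tridiag_eq_zero (Or.inr ?_)), hr1, hs1, h0, tridiag_self, tridiag_succ_right,
    tridiag_succ_left]
  · have : s 1 < s j.succ.succ := hs (by simp [Fin.lt_def])
    omega
  · have : r 1 < r i.succ.succ := hr (by simp [Fin.lt_def])
    omega

variable (S : Subsemiring R) (hl : l ∈ S) (hu : u ∈ S)
include hl hu

theorem minor_tridiag_mem_of_ne {r s : Fin (k + 1) → ℕ} (hr : StrictMono r) (hs : StrictMono s)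
    (htail : minor (tridiag l d u) (Fin.tail r) (Fin.tail s) ∈ S) (h : r 0 ≠ s 0) :
    minor (tridiag l d u) r s ∈ S := by
  have hr' (i : Fin k) : r 0 < r i.succ := hr (Fin.succ_pos i)
  have hs' (j : Fin k) : s 0 < s j.succ := hs (Fin.succ_pos j)
  rcases h.lt_or_gt with h | h
  · by_cases hfar : r 0 + 2 ≤ s 0
    · rw [minor_eq_zero_of_row fun j =>
        tridiag_eq_zero (Or.inl (hfar.trans (hs.monotone (Fin.zero_le j))))]
      exact S.zero_mem
    · rw [minor_succ_of_row fun j => tridiag_eq_zero (Or.inl (by have := hs' j; omega)),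
        show s 0 = r 0 + 1 by omega, tridiag_succ_right]
      exact S.mul_mem hu htail
  · by_cases hfar : s 0 + 2 ≤ r 0
    · rw [minor_eq_zero_of_column fun i =>
        tridiag_eq_zero (Or.inr (hfar.trans (hr.monotone (Fin.zero_le i))))]
      exact S.zero_mem
    · rw [minor_succ_of_column fun i => tridiag_eq_zero (Or.inr (by have := hr' i; omega)),
        show r 0 = s 0 + 1 by omega, tridiag_succ_left]
      exact S.mul_mem hl htail

theorem minor_tridiag_mem_and_sub_mem (hd : d - 1 - l * u ∈ S) (k : ℕ)
    (r s : Fin (k + 1) → ℕ) (hr : StrictMono r) (hs : StrictMono s) :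
    minor (tridiag l d u) r s ∈ S ∧ (r 0 = s 0 →
      minor (tridiag l d u) r s - minor (tridiag l d u) (Fin.tail r) (Fin.tail s) ∈ S) := by
  have hd1 : d - 1 ∈ S := by simpa using S.add_mem hd (S.mul_mem hl hu)
  have combine {k : ℕ} (r s : Fin (k + 1) → ℕ) (hr : StrictMono r) (hs : StrictMono s)
      (htail : minor (tridiag l d u) (Fin.tail r) (Fin.tail s) ∈ S)
      (hdiag : r 0 = s 0 →
        minor (tridiag l d u) r s - minor (tridiag l d u) (Fin.tail r) (Fin.tail s) ∈ S) :
      minor (tridiag l d u) r s ∈ S := by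
    by_cases h0 : r 0 = s 0
    · simpa using S.add_mem (hdiag h0) htail
    · exact minor_tridiag_mem_of_ne S hl hu hr hs htail h0
  induction k with
  | zero =>
    have hdiag (h0 : r 0 = s 0) :
        minor (tridiag l d u) r s - minor (tridiag l d u) (Fin.tail r) (Fin.tail s) ∈ S := by
      rw [minor_succ_of_column finZeroElim, h0, tridiag_self, ← sub_one_mul]
      exact S.mul_mem hd1 (by simp)
    exact ⟨combine r s hr hs (by simp) hdiag, hdiag⟩
  | succ k ih =>
    have htail := ih (Fin.tail r) (Fin.tail s) (hr.comp Fin.strictMono_succ)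
      (hs.comp Fin.strictMono_succ)
    have hdiag (h0 : r 0 = s 0) :
        minor (tridiag l d u) r s - minor (tridiag l d u) (Fin.tail r) (Fin.tail s) ∈ S := by
      have hr01 : r 0 < r 1 := hr Fin.zero_lt_one
      have hs01 : s 0 < s 1 := hs Fin.zero_lt_one
      by_cases hgap : r 0 + 2 ≤ r 1 ∨ s 0 + 2 ≤ s 1
      · rw [minor_tridiag_eq_mul_of_gap hr hs h0 hgap, ← sub_one_mul]
        exact S.mul_mem hd1 htail.1
      · rw [minor_tridiag_eq_sub hr hs h0 (by omega) (by omega),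
          show ∀ a b : R, d * a - u * l * b - a = (d - 1 - l * u) * a + l * u * (a - b) by
            intros; ring]
        exact S.add_mem (S.mul_mem hd htail.1)
          (S.mul_mem (S.mul_mem hl hu) (htail.2 (by show r 1 = s 1; omega)))
    exact ⟨combine r s hr hs htail.1 hdiag, hdiag⟩

theorem isTotallyPositive_tridiag (hd : d - 1 - l * u ∈ S) :
    IsTotallyPositive S (tridiag l d u) := by
  rintro (_ | k) r s hr hs
  · simp
  · exact (minor_tridiag_mem_and_sub_mem S hl hu hd k r s hr hs).1

end Tridiag

theorem det_sum_range_mul_mem (S : Subsemiring R) {N : ℕ} (X : Fin k → ℕ → R)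
    (Y : ℕ → Fin k → R)
    (h : ∀ g : Fin k → ℕ, StrictMono g →
      (Matrix.of fun i j => X i (g j)).det * (Matrix.of fun i j => Y (g i) j).det ∈ S) :
    (Matrix.of fun i j => ∑ t ∈ range N, X i t * Y t j).det ∈ S := by
  have hprod : (Matrix.of fun i j => ∑ t ∈ range N, X i t * Y t j)
      = Matrix.of (fun i (t : Fin N) => X i t) * Matrix.of (fun (t : Fin N) j => Y t j) := by
    ext i j
    simp [Matrix.mul_apply, Fin.sum_univ_eq_sum_range (fun t => X i t * Y t j)]
  rw [hprod, Matrix.det_mul_eq_sum_strictMono]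
  exact sum_mem fun g hg => h _ (Fin.val_strictMono.comp (mem_filter.1 hg).2)

theorem sum_range_eq_of_lower_triangular {c : ℕ → ℕ → R} (hc : ∀ n k, n < k → c n k = 0)
    (f : ℕ → R) {n N : ℕ} (h : n < N) :
    ∑ t ∈ range N, c n t * f t = ∑ t ∈ range (n + 1), c n t * f t := by
  refine (sum_subset (range_subset_range.2 h) fun t _ ht => ?_).symm
  rw [hc n t (by simp at ht; omega), zero_mul]

structure IsOutputMatrix (T c : ℕ → ℕ → R) : Prop where
  zero_zero : c 0 0 = 1
  eq_zero_of_lt : ∀ n k, n < k → c n k = 0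
  succ : ∀ n j, c (n + 1) j = ∑ t ∈ range (n + 1), c n t * T t j

namespace IsOutputMatrix

variable {S : Subsemiring R} {T c : ℕ → ℕ → R} (hc : IsOutputMatrix T c)
include hc

theorem succ_eq_sum_range {n N : ℕ} (h : n < N) (j : ℕ) :
    c (n + 1) j = ∑ t ∈ range N, c n t * T t j := by
  rw [hc.succ, sum_range_eq_of_lower_triangular hc.eq_zero_of_lt _ h]

theorem minor_eq_det_sum_range {k m : ℕ} {r s : Fin k → ℕ} (hpos : ∀ i, 0 < r i)
    (hrm : ∀ i, r i < m + 1) :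
    minor c r s = (Matrix.of fun i j => ∑ t ∈ range m, c (r i - 1) t * T t (s j)).det := by
  refine congrArg Matrix.det (Matrix.ext fun i j => ?_)
  rw [Matrix.of_apply, Matrix.of_apply,
    ← hc.succ_eq_sum_range (n := r i - 1) (by have := hrm i; have := hpos i; omega),
    Nat.sub_add_cancel (hpos i)]

theorem minor_mem_of_lt (hT : IsTotallyPositive S T) (m : ℕ) :
    ∀ k (r s : Fin k → ℕ), StrictMono r → StrictMono s → (∀ i, r i < m) →
      minor c r s ∈ S := by
  induction m with
  | zero =>
    rintro (_ | k) r s - - hr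
    · simp
    · exact absurd (hr 0) (Nat.not_lt_zero _)
  | succ m ih =>
    intro k
    induction k with
    | zero => intro r s _ _ _; simp
    | succ k ihk =>
      intro r s hr hs hrm
      by_cases hr0 : r 0 = 0
      · by_cases hs0 : s 0 = 0
        · rw [minor_succ_of_row fun j => hc.eq_zero_of_lt _ _ (by
            have := hs (Fin.succ_pos j); omega), hr0, hs0, hc.zero_zero, one_mul]
          exact ihk _ _ (hr.comp Fin.strictMono_succ) (hs.comp Fin.strictMono_succ)
            fun i => hrm i.succ
        · rw [minor_eq_zero_of_row fun j => hc.eq_zero_of_lt _ _ (by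
            have := hs.monotone (Fin.zero_le j); omega)]
          exact S.zero_mem
      · have hpos (i : Fin (k + 1)) : 0 < r i := by
          have := hr.monotone (Fin.zero_le i); omega
        rw [hc.minor_eq_det_sum_range hpos fun i => hrm i]
        refine det_sum_range_mul_mem S _ _ fun g hg => S.mul_mem ?_ (hT _ _ _ hg hs)
        refine ih _ (fun i => r i - 1) g (fun i j hij => ?_) hg fun i => ?_
        · have := hr hij; have := hpos i; show r i - 1 < r j - 1; omega
        · have := hrm i; have := hpos i; show r i - 1 < m; omega

theorem isTotallyPositive (hT : IsTotallyPositive S T) : IsTotallyPositive S c :=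
  fun k r s hr hs => hc.minor_mem_of_lt hT (∑ i, r i + 1) k r s hr hs fun i =>
    Nat.lt_succ_of_le (single_le_sum (fun _ _ => Nat.zero_le _) (mem_univ i))

theorem hankel_eq_sum {w : ℕ → R} (hw0 : w 0 = 1) (hsymm : ∀ s t, T s t * w t = w s * T t s)
    (i j N : ℕ) (h : i + j < N) : c (i + j) 0 = ∑ t ∈ range N, c i t * w t * c j t := by
  induction i generalizing j with
  | zero =>
    simp_rw [mul_assoc, sum_range_eq_of_lower_triangular hc.eq_zero_of_lt _ (by omega : 0 < N)]
    simp [hc.zero_zero, hw0]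
  | succ i ih =>
    calc c (i + 1 + j) 0 = c (i + (j + 1)) 0 := by rw [add_right_comm, add_assoc]
      _ = ∑ t ∈ range N, c i t * w t * c (j + 1) t := ih (j + 1) (by omega)
      _ = ∑ s ∈ range N, (∑ t ∈ range N, c i t * T t s) * w s * c j s := by
        simp_rw [hc.succ_eq_sum_range (by omega : j < N), mul_sum, sum_mul]
        rw [sum_comm]
        refine sum_congr rfl fun s _ => sum_congr rfl fun t _ => ?_
        linear_combination -(c i t * c j s) * hsymm t s
      _ = ∑ s ∈ range N, c (i + 1) s * w s * c j s := by
        simp_rw [← hc.succ_eq_sum_range (by omega : i < N)]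

theorem isTotallyPositive_hankel (hT : IsTotallyPositive S T) {w : ℕ → R}
    (hw : ∀ t, w t ∈ S) (hw0 : w 0 = 1) (hsymm : ∀ s t, T s t * w t = w s * T t s) :
    IsTotallyPositive S (fun i j => c (i + j) 0) := by
  intro k r s hr hs
  have hcTP := hc.isTotallyPositive hT
  set N := ∑ i, r i + ∑ j, s j + 1
  have hN (i j : Fin k) : r i + s j < N :=
    Nat.lt_succ_of_le (add_le_add (single_le_sum (fun _ _ => Nat.zero_le _) (mem_univ i))
      (single_le_sum (fun _ _ => Nat.zero_le _) (mem_univ j)))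
  have hprod : minor (fun i j => c (i + j) 0) r s
      = (Matrix.of fun i j => ∑ t ∈ range N, (c (r i) t * w t) * c (s j) t).det :=
    congrArg Matrix.det (Matrix.ext fun i j => hc.hankel_eq_sum hw0 hsymm _ _ _ (hN i j))
  rw [hprod]
  refine det_sum_range_mul_mem S _ _ fun g hg => ?_
  have hleft : (Matrix.of fun i j => c (r i) (g j) * w (g j)).det
      = (∏ j, w (g j)) * minor c r g := by
    rw [minor, ← Matrix.det_mul_row]
    congr 1
    ext i j
    exact mul_comm _ _
  have hright : (Matrix.of fun i j => c (s j) (g i)).det = minor c s g :=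
    Matrix.det_transpose _
  rw [hleft, hright]
  exact S.mul_mem (S.mul_mem (prod_mem fun j _ => hw _) (hcTP _ _ _ hr hg)) (hcTP _ _ _ hs hg)

end IsOutputMatrix

theorem isOutputMatrix_tridiag {l d u : R} {c : ℕ → ℕ → R} (h00 : c 0 0 = 1)
    (hzero : ∀ n k, n < k → c n k = 0) (hrec0 : ∀ n, c (n + 1) 0 = d * c n 0 + l * c n 1)
    (hrec : ∀ n k, c (n + 1) (k + 1) = u * c n k + d * c n (k + 1) + l * c n (k + 2)) :
    IsOutputMatrix (tridiag l d u) c where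
  zero_zero := h00
  eq_zero_of_lt := hzero
  succ n j := by
    rw [← sum_range_eq_of_lower_triangular hzero _ (show n < n + j + 3 by omega)]
    cases j with
    | zero =>
      simp [tridiag_eq_add, mul_add, sum_add_distrib, hrec0]
      ring
    | succ j =>
      simp [tridiag_eq_add, mul_add, sum_add_distrib, hrec, show j < n + (j + 1) + 3 by omega,
        show j + 1 < n + (j + 1) + 3 by omega, show j + 2 < n + (j + 1) + 3 by omega]
      ring

theorem tridiag_mul_pow_comm (l d : R) (s t : ℕ) :
    tridiag l d 1 s t * l ^ t = l ^ s * tridiag l d 1 t s := by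
  simp only [tridiag]
  split_ifs <;> first | omega | (subst_vars; ring)

end TotalPositivity

namespace MvPolynomial

variable (σ R : Type*) [CommSemiring R] [PartialOrder R] [IsOrderedRing R]

def nonnegCoeffs : Subsemiring (MvPolynomial σ R) where
  carrier := {f | ∀ d, 0 ≤ f.coeff d}
  zero_mem' d := by simp
  one_mem' d := by
    classical
    rw [coeff_one]
    split_ifs <;> simp
  add_mem' ha hb d := by
    rw [coeff_add]
    exact add_nonneg (ha d) (hb d)
  mul_mem' ha hb d := by
    classical
    rw [coeff_mul]
    exact sum_nonneg fun x _ => mul_nonneg (ha x.1) (hb x.2)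

variable {σ R}

theorem X_mem_nonnegCoeffs (i : σ) : X i ∈ nonnegCoeffs σ R := fun d => by
  classical
  rw [coeff_X]
  split_ifs <;> simp

end MvPolynomial

open MvPolynomial in
/-- Example 3.3: the polynomials coming from Motzkin paths with level-steps
weighted `1 + p + q` and down-steps weighted `q` form a Stieltjes moment
sequence of polynomials in `p` and `q`. -/
theorem example33_stieltjes
    (c : ℕ → ℕ → MvPolynomial (Fin 2) ℝ)
    (h00 : c 0 0 = 1)
    (hzero : ∀ n k, n < k → c n k = 0)
    (hrec0 : ∀ n, c (n + 1) 0 = (1 + P + Q) * c n 0 + Q * c n 1)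
    (hrec : ∀ n k, c (n + 1) (k + 1) =
      c n k + (1 + P + Q) * c n (k + 1) + Q * c n (k + 2)) :
    xTP (fun i j => c (i + j) 0) := by
  have hP : P ∈ nonnegCoeffs (Fin 2) ℝ := X_mem_nonnegCoeffs 0
  have hQ : Q ∈ nonnegCoeffs (Fin 2) ℝ := X_mem_nonnegCoeffs 1
  have hT : IsTotallyPositive (nonnegCoeffs (Fin 2) ℝ) (tridiag Q (1 + P + Q) 1) :=
    isTotallyPositive_tridiag _ hQ (Subsemiring.one_mem _) (by ring_nf; exact hP)
  have hc : IsOutputMatrix (tridiag Q (1 + P + Q) 1) c :=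
    isOutputMatrix_tridiag h00 hzero (fun n => by rw [hrec0, mul_comm Q])
      (fun n k => by rw [hrec, one_mul, mul_comm Q])
  exact hc.isTotallyPositive_hankel hT (pow_mem hQ) (pow_zero Q) (tridiag_mul_pow_comm Q _)
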